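/- arXiv:2303.10088 — 2 statements merged into one kernel-verified Lean document; each statement's English description precedes it below -/
import Mathlib

section
/- For every ℓ ≥ 0, every set S ⊆ Σ*_ℓ of pairwise compatible words, and every boring extension e of S, there exists a boring extension e' of the full level Σ*_ℓ such that S⌢e ⊆ Σ*_ℓ⌢e'. -/
/-!
A boring extension `e` of a pairwise compatible set `S ⊆ Σ*_ℓ` has two properties: it is
monotone for `⊴`, and `e u = L`, `e v = R` imply `u ⊴ v` and `u ≺ v`. Indeed the level
isomorphism `S ≅ S⌢e` can only be `w ↦ w⌢e(w)` (an isomorphism of finite chains is unique), so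
it preserves `⊴` and reflects `≺`; and compatibility of `u⌢L` with `v⌢R` forces `u ⊴ v`.
Conversely these two properties make an extension of any set of words of length `ℓ` boring.
Extend `e` to all of `Σ*_ℓ` by `R` on words `⊴`-above an `R`-word of `S`, by `L` on the
remaining words `⊴`-below an `L`-word of `S`, and by `X` elsewhere: both properties survive.
-/

/-- The three-letter alphabet `Σ = {L, X, R}`. -/
inductive Sig : Type
  | L
  | X
  | R
  deriving DecidableEq

namespace Sig

def val : Sig → ℕ
  | L => 0
  | X => 1
  | R => 2

/-- The order `L <lex X <lex R` on letters. -/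
def le (a b : Sig) : Prop := a.val ≤ b.val

def lt (a b : Sig) : Prop := a.val < b.val

end Sig

/-- Finite words over the alphabet `Σ = {L, X, R}`. -/
abbrev Word : Type := List Sig

/-- The `i`-th letter of `w` (with a junk value out of range). -/
def idx (w : Word) (i : ℕ) : Sig := w.getD i Sig.L

/-- Strict lexicographic order on words: comparison at the first differing position, a
proper initial segment preceding its extensions. -/
def lexLt (u v : Word) : Prop :=
  (∃ i, i < u.length ∧ i < v.length ∧ Sig.lt (idx u i) (idx v i) ∧
    ∀ j < i, idx u j = idx v j) ∨
  (u.length < v.length ∧ ∀ j < u.length, idx u j = idx v j)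

def lexLe (u v : Word) : Prop := lexLt u v ∨ u = v

/-- The relation `≺`: there is `i < min(|u|,|v|)` with `(u_i, v_i) = (L, R)` and
`u_j ≤lex v_j` for all `j < i`. -/
def prec (u v : Word) : Prop :=
  ∃ i, i < u.length ∧ i < v.length ∧ idx u i = Sig.L ∧ idx v i = Sig.R ∧
    ∀ j < i, Sig.le (idx u j) (idx v j)

/-- The relation `⪯`. -/
def preceq (u v : Word) : Prop := prec u v ∨ u = v

/-- The relation `⊴`: element-wise comparison of words of the same length. -/
def trleq (u v : Word) : Prop :=
  u.length = v.length ∧ ∀ i < u.length, Sig.le (idx u i) (idx v i)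

/-- The relation `⊥`: `⊴`-incomparability. -/
def perp (u v : Word) : Prop := ¬ trleq u v ∧ ¬ trleq v u

/-- `u` and `v` are related if `u ⪯ v`, `v ⪯ u` or `u ⊥ v`. -/
def related (u v : Word) : Prop := preceq u v ∨ preceq v u ∨ perp u v

/-- The compatibility conditions for a pair `u ≤lex v`. -/
def compatPair (u v : Word) : Prop :=
  (∀ l < min u.length v.length, ¬ (idx u l = Sig.R ∧ idx v l = Sig.L)) ∧
  ((∃ l < min u.length v.length, idx u l = Sig.L ∧ idx v l = Sig.R) →
    ∀ l < min u.length v.length, Sig.le (idx u l) (idx v l))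

/-- `u` and `v` are compatible: the `≤lex`-smaller of the two satisfies the compatibility
conditions with the `≤lex`-larger. -/
def compatible (u v : Word) : Prop :=
  (lexLe u v ∧ compatPair u v) ∨ (lexLe v u ∧ compatPair v u)

/-- `S̄`: the segClosure of `S` under initial segments. -/
def segClosure (S : Set Word) : Set Word := {u | ∃ w ∈ S, u <+: w}

/-- Level `l` of a set of words. -/
def level (S : Set Word) (l : ℕ) : Set Word := {w | w ∈ S ∧ w.length = l}

/-- `S̄_l` : level `l` of the segClosure of `S`. -/
def cLevel (S : Set Word) (l : ℕ) : Set Word := level (segClosure S) l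

/-- Isomorphism of level structures `(A; ⪯, ⊴, ≤lex)`: a bijection preserving and
reflecting `⪯`, `⊴` and `≤lex`. -/
def LevelIso (A B : Set Word) : Prop :=
  ∃ e : Word → Word, Set.BijOn e A B ∧
    ∀ u ∈ A, ∀ v ∈ A,
      (preceq u v ↔ preceq (e u) (e v)) ∧
      (trleq u v ↔ trleq (e u) (e v)) ∧
      (lexLe u v ↔ lexLe (e u) (e v))

/-- A level `i` of `S` is interesting. -/
def Interesting (S : Set Word) (i : ℕ) : Prop :=
  ¬ LevelIso (cLevel S i) (cLevel S (i + 1)) ∨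
  (∃ u ∈ cLevel S (i + 1), ∃ v ∈ cLevel S (i + 1),
    ¬ compatible u v ∧ compatible (u.take i) (v.take i)) ∨
  (∃ u ∈ S, u.length = i)

/-- `τ_S(w)`: delete the characters of `w` whose indices are not interesting levels of `S`. -/
noncomputable def tauW (S : Set Word) (w : Word) : Word :=
  ((List.range w.length).filter
    (fun i => @decide (Interesting S i) (Classical.propDecidable _))).map (fun i => idx w i)

/-- A function is shape-preserving if it commutes with taking embedding types. -/
def ShapePreserving (S : Set Word) (f : Word → Word) : Prop :=
  ∀ w ∈ S, tauW S w = tauW (f '' S) (f w)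

/-- `A⌢c`. -/
def appendSet (A : Set Word) (c : Sig) : Set Word := (fun w => w ++ [c]) '' A

def LeafLevelAt (S : Set Word) (l : ℕ) (w : Word) : Prop :=
  w ∈ cLevel S l ∧ (∀ u ∈ cLevel S l, u ≠ w → related w u) ∧
  cLevel S (l + 1) = appendSet (cLevel S l \ {w}) Sig.X

def LeafLevel (S : Set Word) (l : ℕ) : Prop := ∃ w, LeafLevelAt S l w

def SplitLevelAt (S : Set Word) (l : ℕ) (w : Word) : Prop :=
  w ∈ cLevel S l ∧
  cLevel S (l + 1) =
    appendSet {z ∈ cLevel S l | lexLt z w} Sig.X ∪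
    {w ++ [Sig.X], w ++ [Sig.R]} ∪
    appendSet {z ∈ cLevel S l | lexLt w z} Sig.R

def SplitLevel (S : Set Word) (l : ℕ) : Prop := ∃ w, SplitLevelAt S l w

def NewPerpLevelAt (S : Set Word) (l : ℕ) (v w : Word) : Prop :=
  v ∈ cLevel S l ∧ w ∈ cLevel S l ∧ lexLt v w ∧ ¬ related v w ∧
  (∀ u ∈ cLevel S l, lexLt v u → lexLt u w → perp u v ∨ perp u w) ∧
  cLevel S (l + 1) =
    appendSet {z ∈ cLevel S l | lexLt z v} Sig.X ∪
    {v ++ [Sig.R]} ∪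
    appendSet {z ∈ cLevel S l | lexLt v z ∧ lexLt z w ∧ perp z v} Sig.X ∪
    appendSet {z ∈ cLevel S l | lexLt v z ∧ lexLt z w ∧ ¬ perp z v} Sig.R ∪
    {w ++ [Sig.X]} ∪
    appendSet {z ∈ cLevel S l | lexLt w z} Sig.R

def NewPerpLevel (S : Set Word) (l : ℕ) : Prop := ∃ v w, NewPerpLevelAt S l v w

def NewPrecLevelAt (S : Set Word) (l : ℕ) (v w : Word) : Prop :=
  v ∈ cLevel S l ∧ w ∈ cLevel S l ∧ lexLt v w ∧ ¬ related v w ∧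
  (∀ u ∈ cLevel S l, lexLt u v → preceq u w ∨ perp u v) ∧
  (∀ u ∈ cLevel S l, lexLt w u → preceq v u ∨ perp w u) ∧
  cLevel S (l + 1) =
    appendSet {z ∈ cLevel S l | lexLt z v ∧ perp z v} Sig.X ∪
    appendSet {z ∈ cLevel S l | lexLt z v ∧ ¬ perp z v} Sig.L ∪
    {v ++ [Sig.L]} ∪
    appendSet {z ∈ cLevel S l | lexLt v z ∧ lexLt z w} Sig.X ∪
    {w ++ [Sig.R]} ∪
    appendSet {z ∈ cLevel S l | lexLt w z ∧ perp w z} Sig.X ∪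
    appendSet {z ∈ cLevel S l | lexLt w z ∧ ¬ perp w z} Sig.R

def NewPrecLevel (S : Set Word) (l : ℕ) : Prop := ∃ v w, NewPrecLevelAt S l v w

def ExactlyOne (a b c d : Prop) : Prop :=
  (a ∧ ¬b ∧ ¬c ∧ ¬d) ∨ (¬a ∧ b ∧ ¬c ∧ ¬d) ∨ (¬a ∧ ¬b ∧ c ∧ ¬d) ∨ (¬a ∧ ¬b ∧ ¬c ∧ d)

/-- A poset-diary: an antichain under the initial segment relation such that on each level
below the supremum of lengths exactly one of the four critical events happens. -/
def PosetDiary (S : Set Word) : Prop :=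
  (∀ u ∈ S, ∀ v ∈ S, u <+: v → u = v) ∧
  ∀ l : ℕ, (∃ w ∈ S, l < w.length) →
    ExactlyOne (LeafLevel S l) (SplitLevel S l) (NewPerpLevel S l) (NewPrecLevel S l)

/-- `A⌢e`: extend each word of `A` by the letter that the extension `e` assigns to it. -/
def extSet (A : Set Word) (e : Word → Sig) : Set Word := (fun w => w ++ [e w]) '' A

/-- `e` is a boring extension of `A ⊆ Σ*_l` if level `l` is not an interesting level of
`A⌢e`. -/
def BoringExt (A : Set Word) (l : ℕ) (e : Word → Sig) : Prop :=
  ¬ Interesting (extSet A e) l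

namespace Sig

lemma val_injective : Function.Injective Sig.val := by
  intro a b h
  cases a <;> cases b <;> first | rfl | cases h

instance : LinearOrder Sig := LinearOrder.lift' Sig.val val_injective

instance : Fintype Sig := ⟨{L, X, R}, fun a => by cases a <;> decide⟩

lemma le_iff_le {a b : Sig} : Sig.le a b ↔ a ≤ b := Iff.rfl

lemma eq_L_of_le_L {a : Sig} (h : a ≤ L) : a = L := by
  revert h; cases a <;> decide

lemma eq_R_of_R_le {a : Sig} (h : R ≤ a) : a = R := by
  revert h; cases a <;> decide

end Sig

lemma idx_eq_getElem {w : Word} {i : ℕ} (h : i < w.length) : idx w i = w[i] := by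
  simp [idx, List.getD_eq_getElem?_getD, h]

lemma idx_append_of_lt {u : Word} (a : Sig) {i : ℕ} (h : i < u.length) :
    idx (u ++ [a]) i = idx u i := by
  simp [idx, List.getElem?_append_left h]

lemma idx_append_length (u : Word) (a : Sig) : idx (u ++ [a]) u.length = a := by
  simp [idx]

lemma lexLt_iff_lt {u v : Word} : lexLt u v ↔ u < v := by
  rw [List.lt_iff_exists, lexLt, or_comm]
  refine or_congr ?_ ?_
  · constructor
    · rintro ⟨h, hj⟩
      refine ⟨List.ext_getElem (by simp; omega) fun j h1 h2 => ?_, h⟩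
      simpa [idx_eq_getElem h1, idx_eq_getElem (h1.trans h)] using hj j h1
    · rintro ⟨h, hlt⟩
      refine ⟨hlt, fun j hj => ?_⟩
      rw [show idx u j = idx (v.take u.length) j from congrArg (idx · j) h]
      simp [idx, hj]
  · constructor
    · rintro ⟨i, h1, h2, hlt, hj⟩
      refine ⟨i, h1, h2, fun j hji => ?_, ?_⟩
      · simpa [idx_eq_getElem (hji.trans h1), idx_eq_getElem (hji.trans h2)] using hj j hji
      · rwa [idx_eq_getElem h1, idx_eq_getElem h2] at hlt
    · rintro ⟨i, h1, h2, hj, hlt⟩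
      refine ⟨i, h1, h2, ?_, fun j hji => ?_⟩
      · rwa [idx_eq_getElem h1, idx_eq_getElem h2]
      · simpa [idx_eq_getElem (hji.trans h1), idx_eq_getElem (hji.trans h2)] using hj j hji

lemma lexLe_iff_le {u v : Word} : lexLe u v ↔ u ≤ v := by
  rw [lexLe, lexLt_iff_lt, le_iff_lt_or_eq]

lemma trleq_refl (u : Word) : trleq u u := ⟨rfl, fun _ _ => le_refl (α := Sig) _⟩

lemma trleq_trans {u v w : Word} (h1 : trleq u v) (h2 : trleq v w) : trleq u w :=
  ⟨h1.1.trans h2.1, fun i hi => le_trans (α := Sig) (h1.2 i hi) (h2.2 i (h1.1 ▸ hi))⟩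

lemma lt_of_trleq_of_ne {u v : Word} (h : trleq u v) (hne : u ≠ v) : u < v := by
  refine (lt_or_gt_of_ne hne).resolve_right fun hvu => ?_
  rcases lexLt_iff_lt.2 hvu with ⟨i, hi, -, hlt, -⟩ | ⟨hlen, -⟩
  · exact not_le_of_gt (α := Sig) hlt (h.2 i (h.1 ▸ hi))
  · exact hlen.ne h.1.symm

lemma prec_mono {u p q v : Word} (hup : trleq u p) (h : prec p q) (hqv : trleq q v) :
    prec u v := by
  obtain ⟨i, hip, hiq, hpL, hqR, hle⟩ := h
  refine ⟨i, hup.1 ▸ hip, hqv.1 ▸ hiq, ?_, ?_, fun j hj => ?_⟩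
  · exact Sig.eq_L_of_le_L (hpL ▸ hup.2 i (hup.1 ▸ hip))
  · exact Sig.eq_R_of_R_le (hqR ▸ hqv.2 i hiq)
  · exact le_trans (α := Sig) (hup.2 j (by rw [hup.1]; omega))
      (le_trans (α := Sig) (hle j hj) (hqv.2 j (by omega)))

section AppendLetter

variable {u v : Word} {a b : Sig}

lemma append_singleton_lt_append_singleton (hl : u.length = v.length) (h : u < v) :
    u ++ [a] < v ++ [b] := by
  rcases lexLt_iff_lt.2 h with ⟨i, hiu, hiv, hlt, heq⟩ | ⟨hlen, -⟩
  · refine lexLt_iff_lt.1 (Or.inl ⟨i, by simp; omega, by simp; omega, ?_, fun j hj => ?_⟩)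
    · rwa [idx_append_of_lt _ hiu, idx_append_of_lt _ hiv]
    · rw [idx_append_of_lt _ (by omega), idx_append_of_lt _ (by omega), heq j hj]
  · omega

lemma trleq_append_singleton_iff (hl : u.length = v.length) :
    trleq (u ++ [a]) (v ++ [b]) ↔ trleq u v ∧ a ≤ b := by
  constructor
  · rintro ⟨-, h⟩
    refine ⟨⟨hl, fun i hi => ?_⟩, ?_⟩
    · simpa [idx_append_of_lt _ hi, idx_append_of_lt _ (hl ▸ hi)] using h i (by simp; omega)
    · have := h u.length (by simp)
      rwa [idx_append_length, hl, idx_append_length] at this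
  · rintro ⟨⟨-, h⟩, hab⟩
    refine ⟨by simp [hl], fun i hi => ?_⟩
    rcases Nat.lt_or_ge i u.length with hiu | hiu
    · rw [idx_append_of_lt _ hiu, idx_append_of_lt _ (hl ▸ hiu)]
      exact h i hiu
    · obtain rfl : i = u.length := by simp at hi; omega
      rwa [idx_append_length, hl, idx_append_length]

lemma prec_append_singleton_iff (hl : u.length = v.length) :
    prec (u ++ [a]) (v ++ [b]) ↔ prec u v ∨ (a = Sig.L ∧ b = Sig.R ∧ trleq u v) := by
  constructor
  · rintro ⟨i, hiu, hiv, hL, hR, hle⟩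
    have hle' : ∀ j < min i u.length, idx u j ≤ idx v j := fun j hj => by
      simpa [Sig.le_iff_le, idx_append_of_lt _ (lt_min_iff.1 hj).2,
        idx_append_of_lt _ (hl ▸ (lt_min_iff.1 hj).2)] using hle j (lt_min_iff.1 hj).1
    rcases Nat.lt_or_ge i u.length with hi | hi
    · refine Or.inl ⟨i, hi, hl ▸ hi, ?_, ?_, fun j hj => hle' j (lt_min_iff.2 ⟨hj, by omega⟩)⟩
      · rwa [idx_append_of_lt _ hi] at hL
      · rwa [idx_append_of_lt _ (hl ▸ hi)] at hR
    · obtain rfl : i = u.length := by simp at hiu; omega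
      rw [idx_append_length] at hL
      rw [hl, idx_append_length] at hR
      exact Or.inr ⟨hL, hR, hl, fun j hj => hle' j (by omega)⟩
  · rintro (⟨i, hiu, hiv, hL, hR, hle⟩ | ⟨rfl, rfl, htr⟩)
    · refine ⟨i, by simp; omega, by simp; omega, ?_, ?_, fun j hj => ?_⟩
      · rwa [idx_append_of_lt _ hiu]
      · rwa [idx_append_of_lt _ hiv]
      · rw [idx_append_of_lt _ (by omega), idx_append_of_lt _ (by omega)]
        exact hle j hj
    · refine ⟨u.length, by simp, by simp [hl], idx_append_length _ _, by
        rw [hl, idx_append_length], fun j hj => ?_⟩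
      rw [idx_append_of_lt _ hj, idx_append_of_lt _ (hl ▸ hj)]
      exact htr.2 j hj

lemma compatPair_append_singleton (hl : u.length = v.length)
    (h : compatPair u v) (hRL : ¬ (a = Sig.R ∧ b = Sig.L))
    (hLR : a = Sig.L → b = Sig.R → trleq u v) (hmono : trleq u v → a ≤ b) :
    compatPair (u ++ [a]) (v ++ [b]) := by
  have hmin : min (u ++ [a]).length (v ++ [b]).length = u.length + 1 := by simp [hl]
  rw [compatPair, hmin]
  refine ⟨fun i hi => ?_, fun ⟨i, hi, hL, hR⟩ => ?_⟩
  · rcases Nat.lt_or_ge i u.length with hiu | hiu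
    · rw [idx_append_of_lt _ hiu, idx_append_of_lt _ (hl ▸ hiu)]
      exact h.1 i (by simp [← hl, hiu])
    · obtain rfl : i = u.length := by omega
      rwa [idx_append_length, hl, idx_append_length]
  · have htr : trleq u v := by
      rcases Nat.lt_or_ge i u.length with hiu | hiu
      · rw [idx_append_of_lt _ hiu] at hL
        rw [idx_append_of_lt _ (hl ▸ hiu)] at hR
        exact ⟨hl, fun j hj => h.2 ⟨i, by simp [← hl, hiu], hL, hR⟩ j (by simp [← hl, hj])⟩
      · obtain rfl : i = u.length := by omega
        rw [idx_append_length] at hL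
        rw [hl, idx_append_length] at hR
        exact hLR hL hR
    simpa using ((trleq_append_singleton_iff hl).2 ⟨htr, hmono htr⟩).2

lemma trleq_of_compatible_append_L_R (hl : u.length = v.length)
    (h : compatible (u ++ [Sig.L]) (v ++ [Sig.R])) : trleq u v := by
  have hmin : u.length < min (u ++ [Sig.L]).length (v ++ [Sig.R]).length := by simp [hl]
  rcases h with ⟨-, -, hLR⟩ | ⟨-, hRL, -⟩
  · have := hLR ⟨u.length, hmin, idx_append_length _ _, by rw [hl, idx_append_length]⟩
    exact ((trleq_append_singleton_iff hl).1
      ⟨by simp [hl], fun j hj => this j (by simpa [hl] using hj)⟩).1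
  · exact absurd ⟨by rw [hl, idx_append_length], idx_append_length _ _⟩
      (hRL u.length (min_comm (α := ℕ) _ _ ▸ hmin))

end AppendLetter

lemma Set.BijOn.eqOn_of_le_iff {α β : Type*} [LinearOrder α] [Preorder β] {A : Set α}
    {B : Set β} (hA : A.Finite) {f g : α → β} (hf : Set.BijOn f A B) (hg : Set.BijOn g A B)
    (hf' : ∀ u ∈ A, ∀ v ∈ A, u ≤ v ↔ f u ≤ f v) (hg' : ∀ u ∈ A, ∀ v ∈ A, u ≤ v ↔ g u ≤ g v) :
    Set.EqOn f g A := by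
  have := hA.to_subtype
  let F : A ≃o B := ⟨hf.equiv f, fun {u v} => (hf' u u.2 v v.2).symm⟩
  let G : A ≃o B := ⟨hg.equiv g, fun {u v} => (hg' u u.2 v v.2).symm⟩
  exact fun w hw => congrArg Subtype.val
    (DFunLike.congr_fun (Subsingleton.elim F G) ⟨w, hw⟩ : F ⟨w, hw⟩ = G ⟨w, hw⟩)

section ExtSet

variable {A : Set Word} {l : ℕ} {f : Word → Sig}

lemma length_of_mem_extSet (hA : ∀ w ∈ A, w.length = l) {x : Word} (hx : x ∈ extSet A f) :
    x.length = l + 1 := by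
  obtain ⟨w, hw, rfl⟩ := hx
  simp [hA w hw]

lemma cLevel_extSet_self (hA : ∀ w ∈ A, w.length = l) : cLevel (extSet A f) l = A := by
  ext u
  constructor
  · rintro ⟨⟨-, ⟨w, hw, rfl⟩, hpre⟩, rfl⟩
    rwa [List.prefix_iff_eq_take.1 hpre, ← hA w hw, List.take_left]
  · exact fun hu => ⟨⟨u ++ [f u], ⟨u, hu, rfl⟩, List.prefix_append u _⟩, hA u hu⟩

lemma cLevel_extSet_succ (hA : ∀ w ∈ A, w.length = l) :
    cLevel (extSet A f) (l + 1) = extSet A f := by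
  ext u
  constructor
  · rintro ⟨⟨w, hw, hpre⟩, hlen⟩
    rwa [hpre.eq_of_length (hlen.trans (length_of_mem_extSet hA hw).symm)]
  · exact fun hu => ⟨⟨u, hu, List.prefix_refl u⟩, length_of_mem_extSet hA hu⟩

lemma boringExt_iff (hA : ∀ w ∈ A, w.length = l) :
    BoringExt A l f ↔ LevelIso A (extSet A f) ∧
      ∀ u ∈ A, ∀ v ∈ A, compatible u v → compatible (u ++ [f u]) (v ++ [f v]) := by
  simp only [BoringExt, Interesting, cLevel_extSet_self hA, cLevel_extSet_succ hA, not_or,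
    not_not, not_exists, not_and]
  have hlen : ∀ x ∈ extSet A f, ¬ x.length = l := fun x hx => by
    rw [length_of_mem_extSet hA hx]; omega
  refine and_congr_right fun _ => (and_iff_left hlen).trans ⟨?_, ?_⟩
  · intro h u hu v hv
    have := h _ ⟨u, hu, rfl⟩ _ ⟨v, hv, rfl⟩
    rw [← hA u hu, List.take_left, hA u hu, ← hA v hv, List.take_left] at this
    exact not_imp_not.1 this
  · rintro h _ ⟨u, hu, rfl⟩ _ ⟨v, hv, rfl⟩
    rw [← hA u hu, List.take_left, hA u hu, ← hA v hv, List.take_left]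
    exact not_imp_not.2 (h u hu v hv)

lemma injOn_append_singleton (hA : ∀ w ∈ A, w.length = l) :
    Set.InjOn (fun w => w ++ [f w]) A :=
  fun u hu v hv h => (List.append_inj h (by rw [hA u hu, hA v hv])).1

lemma le_iff_append_singleton_le (hA : ∀ w ∈ A, w.length = l) {u v : Word} (hu : u ∈ A)
    (hv : v ∈ A) : u ≤ v ↔ u ++ [f u] ≤ v ++ [f v] := by
  have hl : ∀ {x y : Word}, x ∈ A → y ∈ A → x < y → x ++ [f x] < y ++ [f y] :=
    fun hx hy => append_singleton_lt_append_singleton ((hA _ hx).trans (hA _ hy).symm)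
  refine ⟨fun h => ?_, fun h => not_lt.1 fun hvu => not_le.2 (hl hv hu hvu) h⟩
  rcases h.lt_or_eq with h | rfl
  · exact (hl hu hv h).le
  · exact le_rfl

lemma LevelIso.extSet_relations (hA : ∀ w ∈ A, w.length = l) (h : LevelIso A (extSet A f))
    {u v : Word} (hu : u ∈ A) (hv : v ∈ A) :
    (preceq u v ↔ preceq (u ++ [f u]) (v ++ [f v])) ∧
      (trleq u v ↔ trleq (u ++ [f u]) (v ++ [f v])) := by
  obtain ⟨g, hg, hrel⟩ := h
  have hcanon : Set.EqOn g (fun w => w ++ [f w]) A :=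
    hg.eqOn_of_le_iff ((List.finite_length_eq Sig l).subset hA)
      ((injOn_append_singleton hA).bijOn_image)
      (fun u hu v hv => by simpa only [lexLe_iff_le] using (hrel u hu v hv).2.2)
      (fun u hu v hv => le_iff_append_singleton_le hA hu hv)
  have := hrel u hu v hv
  rw [hcanon hu, hcanon hv] at this
  exact ⟨this.1, this.2.1⟩

def TrleqMono (A : Set Word) (f : Word → Sig) : Prop :=
  ∀ u ∈ A, ∀ v ∈ A, trleq u v → f u ≤ f v

def LBelowR (A : Set Word) (f : Word → Sig) : Prop :=
  ∀ u ∈ A, ∀ v ∈ A, f u = Sig.L → f v = Sig.R → trleq u v ∧ prec u v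

lemma trleqMono_of_boringExt (hA : ∀ w ∈ A, w.length = l) (h : BoringExt A l f) :
    TrleqMono A f := fun u hu v hv huv =>
  ((trleq_append_singleton_iff ((hA u hu).trans (hA v hv).symm)).1
    ((((boringExt_iff hA).1 h).1.extSet_relations hA hu hv).2.1 huv)).2

lemma lBelowR_of_boringExt (hA : ∀ w ∈ A, w.length = l)
    (hcompat : ∀ u ∈ A, ∀ v ∈ A, compatible u v) (h : BoringExt A l f) : LBelowR A f := by
  intro u hu v hv huL hvR
  have hl : u.length = v.length := (hA u hu).trans (hA v hv).symm
  obtain ⟨hiso, hext⟩ := (boringExt_iff hA).1 h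
  have htr : trleq u v := by
    have := hext u hu v hv (hcompat u hu v hv)
    rw [huL, hvR] at this
    exact trleq_of_compatible_append_L_R hl this
  have hprec : preceq (u ++ [f u]) (v ++ [f v]) :=
    Or.inl ((prec_append_singleton_iff hl).2 (Or.inr ⟨huL, hvR, htr⟩))
  rcases (hiso.extSet_relations hA hu hv).1.2 hprec with hp | rfl
  · exact ⟨htr, hp⟩
  · exact absurd (huL.symm.trans hvR) (by decide)

lemma levelIso_extSet (hA : ∀ w ∈ A, w.length = l) (hmono : TrleqMono A f)
    (hLR : LBelowR A f) : LevelIso A (extSet A f) := by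
  refine ⟨_, (injOn_append_singleton hA).bijOn_image, fun u hu v hv => ⟨?_, ?_, ?_⟩⟩
  · have hl : u.length = v.length := (hA u hu).trans (hA v hv).symm
    refine ⟨fun h => ?_, fun h => ?_⟩
    · rcases h with h | rfl
      · exact Or.inl ((prec_append_singleton_iff hl).2 (Or.inl h))
      · exact Or.inr rfl
    · rcases h with h | h
      · rcases (prec_append_singleton_iff hl).1 h with h | ⟨huL, hvR, -⟩
        · exact Or.inl h
        · exact Or.inl (hLR u hu v hv huL hvR).2
      · exact Or.inr (injOn_append_singleton hA hu hv h)
  · rw [trleq_append_singleton_iff ((hA u hu).trans (hA v hv).symm)]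
    exact ⟨fun h => ⟨h, hmono u hu v hv h⟩, And.left⟩
  · simp only [lexLe_iff_le]
    exact le_iff_append_singleton_le hA hu hv

lemma compatible_append_singleton (hA : ∀ w ∈ A, w.length = l) (hmono : TrleqMono A f)
    (hLR : LBelowR A f) {u v : Word} (hu : u ∈ A) (hv : v ∈ A) (h : compatible u v) :
    compatible (u ++ [f u]) (v ++ [f v]) := by
  have key : ∀ {x y : Word}, x ∈ A → y ∈ A → lexLe x y → compatPair x y →
      lexLe (x ++ [f x]) (y ++ [f y]) ∧ compatPair (x ++ [f x]) (y ++ [f y]) := by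
    intro x y hx hy hle hc
    have hl : x.length = y.length := (hA x hx).trans (hA y hy).symm
    refine ⟨lexLe_iff_le.2 ((le_iff_append_singleton_le hA hx hy).1 (lexLe_iff_le.1 hle)),
      compatPair_append_singleton hl hc ?_ (fun hxL hyR => (hLR x hx y hy hxL hyR).1)
        (hmono x hx y hy)⟩
    rintro ⟨hxR, hyL⟩
    have hyx := (hLR y hy x hx hyL hxR).1
    rcases eq_or_ne y x with rfl | hne
    · exact absurd (hxR.symm.trans hyL) (by decide)
    · exact not_lt.2 (lexLe_iff_le.1 hle) (lt_of_trleq_of_ne hyx hne)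
  rcases h with ⟨hle, hc⟩ | ⟨hle, hc⟩
  · exact Or.inl (key hu hv hle hc)
  · exact Or.inr (key hv hu hle hc)

lemma boringExt_of_trleqMono_of_lBelowR (hA : ∀ w ∈ A, w.length = l) (hmono : TrleqMono A f)
    (hLR : LBelowR A f) : BoringExt A l f :=
  (boringExt_iff hA).2 ⟨levelIso_extSet hA hmono hLR,
    fun _ hu _ hv => compatible_append_singleton hA hmono hLR hu hv⟩

end ExtSet

section ExtLetter

open Classical in
noncomputable def extLetter (S : Set Word) (e : Word → Sig) (w : Word) : Sig :=
  if ∃ q ∈ S, trleq q w ∧ e q = Sig.R then Sig.R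
  else if ∃ p ∈ S, trleq w p ∧ e p = Sig.L then Sig.L
  else Sig.X

variable {S : Set Word} {e : Word → Sig}

lemma extLetter_eq_of_mem (hmono : TrleqMono S e) {w : Word} (hw : w ∈ S) :
    extLetter S e w = e w := by
  unfold extLetter
  split_ifs with hR hL
  · obtain ⟨q, hq, hqw, hqR⟩ := hR
    exact (Sig.eq_R_of_R_le (hqR ▸ hmono q hq w hw hqw)).symm
  · obtain ⟨p, hp, hwp, hpL⟩ := hL
    exact (Sig.eq_L_of_le_L (hpL ▸ hmono w hw p hp hwp)).symm
  · cases hew : e w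
    · exact absurd ⟨w, hw, trleq_refl w, hew⟩ hL
    · rfl
    · exact absurd ⟨w, hw, trleq_refl w, hew⟩ hR

lemma exists_of_extLetter_eq_R {w : Word} (h : extLetter S e w = Sig.R) :
    ∃ q ∈ S, trleq q w ∧ e q = Sig.R := by
  unfold extLetter at h
  split_ifs at h with hR
  exact hR

lemma exists_of_extLetter_eq_L {w : Word} (h : extLetter S e w = Sig.L) :
    ∃ p ∈ S, trleq w p ∧ e p = Sig.L := by
  unfold extLetter at h
  split_ifs at h with hR hL
  exact hL

lemma trleqMono_extLetter (A : Set Word) : TrleqMono A (extLetter S e) := by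
  intro u _ v _ huv
  have hR : (∃ q ∈ S, trleq q u ∧ e q = Sig.R) → ∃ q ∈ S, trleq q v ∧ e q = Sig.R :=
    fun ⟨q, hq, hqu, hqR⟩ => ⟨q, hq, trleq_trans hqu huv, hqR⟩
  have hL : (∃ p ∈ S, trleq v p ∧ e p = Sig.L) → ∃ p ∈ S, trleq u p ∧ e p = Sig.L :=
    fun ⟨p, hp, hvp, hpL⟩ => ⟨p, hp, trleq_trans huv hvp, hpL⟩
  unfold extLetter
  split_ifs <;> first | decide | exact absurd (hR ‹_›) ‹_› | exact absurd (hL ‹_›) ‹_›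

lemma lBelowR_extLetter (hLR : LBelowR S e) (A : Set Word) : LBelowR A (extLetter S e) := by
  intro u _ v _ huL hvR
  obtain ⟨p, hp, hup, hpL⟩ := exists_of_extLetter_eq_L huL
  obtain ⟨q, hq, hqv, hqR⟩ := exists_of_extLetter_eq_R hvR
  obtain ⟨hpq, hprec⟩ := hLR p hp q hq hpL hqR
  exact ⟨trleq_trans hup (trleq_trans hpq hqv), prec_mono hup hprec hqv⟩

end ExtLetter

/-- every boring extension of a set of pairwise compatible words of length
`l` extends to a boring extension of the full level `Σ*_l`. -/
theorem boring_extension_extends (l : ℕ) (S : Set Word) (hS : ∀ w ∈ S, w.length = l)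
    (hcompat : ∀ u ∈ S, ∀ v ∈ S, compatible u v)
    (e : Word → Sig) (hbor : BoringExt S l e) :
    ∃ e' : Word → Sig, BoringExt {w : Word | w.length = l} l e' ∧ ∀ w ∈ S, e' w = e w := by
  have hmono : TrleqMono S e := trleqMono_of_boringExt hS hbor
  have hLR : LBelowR S e := lBelowR_of_boringExt hS hcompat hbor
  refine ⟨extLetter S e, ?_, fun _ hw => extLetter_eq_of_mem hmono hw⟩
  exact boringExt_of_trleqMono_of_lBelowR (fun _ hw => hw) (trleqMono_extLetter _)
    (lBelowR_extLetter hLR _)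
end

section
/- Let Σ be a finite alphabet. If Σ* (the set of all finite words over Σ) is coloured with finitely many colours, then there exists an infinite-parameter word W such that the set W[Σ*] = {W(s) : s ∈ Σ*} is monochromatic. -/
/-- An infinite-parameter word over the alphabet `α`: an infinite string over
`α ⊕ {λ_0, λ_1, …}` in which every parameter `λ_k` occurs and the first occurrence of
`λ_{k+1}` appears after the first occurrence of `λ_k`. -/
def IsInfParamWord {α : Type} (W : ℕ → α ⊕ ℕ) : Prop :=
  (∀ k : ℕ, ∃ n : ℕ, W n = Sum.inr k) ∧
  (∀ k n : ℕ, W n = Sum.inr (k + 1) → ∃ m < n, W m = Sum.inr k)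

/-- `IsSubst W s t` expresses that `t = W(s)`: `t` is the initial segment of `W` up to
(but not including) the first occurrence of the parameter `λ_{|s|}`, with every letter kept
and every parameter `λ_i` replaced by `s_i`. -/
def IsSubst {α : Type} (W : ℕ → α ⊕ ℕ) (s t : List α) : Prop :=
  W t.length = Sum.inr s.length ∧
  (∀ m < t.length, W m ≠ Sum.inr s.length) ∧
  (∀ n : ℕ, ∀ hn : n < t.length,
    (∀ a : α, W n = Sum.inl a → t.get ⟨n, hn⟩ = a) ∧
    (∀ i : ℕ, W n = Sum.inr i → ∃ hi : i < s.length, t.get ⟨n, hn⟩ = s.get ⟨i, hi⟩))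

/-!
Ultrafilter proof. Write a variable word as a word over `Option α` whose variable is `none`, and
let `subst a` put the letter `a` in place of the variable. In the compact right-topological
semigroup of ultrafilters on such words take an idempotent `w` that is minimal among the
idempotents living on constant words, and an idempotent `v` living on words that start with the
variable, with `v * w = v`. Then `w * subst a (v)` is an idempotent below `w`, so minimality gives
`w * subst a (v) = w`, and consequently `subst a (v) * subst b (v) = subst a (v)`. These two
identities let one pick, inside the colour class that `w` lives on, a constant word `p` and
variable words `x₀, x₁, …` such that every product `p * x₀(s₀) * ⋯ * xₙ₋₁(sₙ₋₁)` stays in the class.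
Turning the variable of `xᵢ` into the parameter `λᵢ` gives the parameter word `p x₀ x₁ ⋯`, whose
instances are exactly these products.
-/

section RightTopological

variable {M : Type*} [Semigroup M] [TopologicalSpace M] [T2Space M]

theorem exists_minimal_closed_leftIdeal (continuous_mul_left : ∀ r : M, Continuous (· * r))
    {S : Set M} (hS : IsCompact S) (hSmul : ∀ x ∈ S, ∀ y ∈ S, x * y ∈ S) (hne : S.Nonempty) :
    ∃ L ⊆ S, IsClosed L ∧ L.Nonempty ∧ (∀ x ∈ S, ∀ y ∈ L, x * y ∈ L) ∧
      ∀ y ∈ L, L ⊆ (· * y) '' S := by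
  let 𝒮 : Set (Set M) :=
    {L | L ⊆ S ∧ IsClosed L ∧ L.Nonempty ∧ ∀ x ∈ S, ∀ y ∈ L, x * y ∈ L}
  obtain ⟨L, hLmin⟩ : ∃ L, Minimal (· ∈ 𝒮) L := by
    refine zorn_superset 𝒮 fun c hc𝒮 hc => ?_
    rcases c.eq_empty_or_nonempty with rfl | ⟨L₀, hL₀⟩
    · exact ⟨S, ⟨subset_rfl, hS.isClosed, hne, hSmul⟩, by simp⟩
    refine ⟨⋂₀ c, ⟨(Set.sInter_subset_of_mem hL₀).trans (hc𝒮 hL₀).1,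
      isClosed_sInter fun L hL => (hc𝒮 hL).2.1, ?_, ?_⟩, fun L hL => Set.sInter_subset_of_mem hL⟩
    · have : Nonempty c := ⟨⟨L₀, hL₀⟩⟩
      rw [Set.sInter_eq_iInter]
      exact IsCompact.nonempty_iInter_of_directed_nonempty_isCompact_isClosed _
        (DirectedOn.directed_val (IsChain.directedOn hc.symm)) (fun L => (hc𝒮 L.2).2.2.1)
        (fun L => hS.of_isClosed_subset (hc𝒮 L.2).2.1 (hc𝒮 L.2).1) (fun L => (hc𝒮 L.2).2.1)
    · exact fun x hx y hy => Set.mem_sInter.2 fun L hL => (hc𝒮 hL).2.2.2 x hx y (hy L hL)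
  obtain ⟨hLS, hL, hLne, hLideal⟩ := hLmin.prop
  refine ⟨L, hLS, hL, hLne, hLideal, fun y hy => (hLmin.eq_of_subset ⟨?_, ?_, ?_, ?_⟩ ?_).ge⟩
  · rintro _ ⟨x, hx, rfl⟩
    exact hLS (hLideal x hx y hy)
  · exact (hS.image (continuous_mul_left y)).isClosed
  · exact ⟨y * y, y, hLS hy, rfl⟩
  · rintro x hx _ ⟨z, hz, rfl⟩
    exact ⟨x * z, hSmul x hx z hz, mul_assoc x z y⟩
  · rintro _ ⟨x, hx, rfl⟩
    exact hLideal x hx y hy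

theorem exists_minimal_idempotent (continuous_mul_left : ∀ r : M, Continuous (· * r))
    {S : Set M} (hS : IsCompact S) (hSmul : ∀ x ∈ S, ∀ y ∈ S, x * y ∈ S) (hne : S.Nonempty) :
    ∃ e ∈ S, e * e = e ∧ ∀ u ∈ S, u * u = u → u * e = u → e * u = u → u = e := by
  obtain ⟨L, hLS, hL, hLne, hLideal, hLmin⟩ :=
    exists_minimal_closed_leftIdeal continuous_mul_left hS hSmul hne
  obtain ⟨e, heL, he⟩ := exists_idempotent_in_compact_subsemigroup continuous_mul_left L hLne
    (hS.of_isClosed_subset hL hLS) fun x hx y hy => hLideal x (hLS hx) y hy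
  refine ⟨e, hLS heL, he, fun u hu huu hue heu => ?_⟩
  have huL : u ∈ L := hue ▸ hLideal u hu e heL
  obtain ⟨x, -, hxu⟩ := hLmin u huL heL
  have hxu : x * u = e := hxu
  calc u = e * u := heu.symm
    _ = e := by rw [← hxu, mul_assoc, huu]

end RightTopological

attribute [local instance] Ultrafilter.semigroup

namespace Ultrafilter

variable {M N : Type*}

theorem mem_mul_iff [Semigroup M] {U V : Ultrafilter M} {s : Set M} :
    s ∈ U * V ↔ {m | {m' | m * m' ∈ s} ∈ V} ∈ U :=
  Iff.rfl

theorem map_mul {F : Type*} [Semigroup M] [Semigroup N] [FunLike F M N] [MulHomClass F M N]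
    (f : F) (U V : Ultrafilter M) : (U * V).map f = U.map f * V.map f := by
  ext s
  simp only [mem_map, mem_mul_iff, Set.preimage_ofPred_eq, Set.mem_preimage, _root_.map_mul]

theorem exists_subset_mem_forall_mul_mem [Semigroup M] {ι : Type*} [Finite ι]
    {w : Ultrafilter M} {u : ι → Ultrafilter M} (hw : ∀ a, w * u a = w)
    (hu : ∀ a b, u a * u b = u a) {A : Set M} (hA : A ∈ w) :
    ∃ G ⊆ A, G ∈ w ∧ ∀ p ∈ G, ∀ a, {q | p * q ∈ G} ∈ u a := by
  refine ⟨{p | p ∈ A ∧ ∀ a, {q | p * q ∈ A} ∈ u a}, fun p hp => hp.1,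
    Filter.inter_mem hA (Filter.eventually_all.2 fun a => ?_), fun p hp a => ?_⟩
  · exact mem_mul_iff.1 (by rwa [hw a])
  refine Filter.inter_mem (hp.2 a) (Filter.eventually_all.2 fun b => ?_)
  filter_upwards [mem_mul_iff.1 (by rw [hu a b]; exact hp.2 a)] with q hq
  simpa only [mul_assoc] using hq

end Ultrafilter

theorem exists_seq_forall_ofFn {X : Type*} {P : List X → Prop} {Q : X → Prop} (h₀ : P [])
    (hstep : ∀ l, P l → ∃ x, Q x ∧ P (l ++ [x])) :
    ∃ xs : ℕ → X, ∀ n, Q (xs n) ∧ P (List.ofFn fun i : Fin n => xs i) := by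
  have : Nonempty X := let ⟨x, _⟩ := hstep [] h₀; ⟨x⟩
  choose! next hnext using hstep
  let prefixes : ℕ → List X := fun n => Nat.rec [] (fun _ l => l ++ [next l]) n
  have hP : ∀ n, P (prefixes n) := fun n => by
    induction n with
    | zero => exact h₀
    | succ n ih => exact (hnext _ ih).2
  have hprefixes : ∀ n, prefixes n = List.ofFn fun i : Fin n => next (prefixes i) := fun n => by
    induction n with
    | zero => rfl
    | succ n ih => simp only [List.ofFn_succ_last, Fin.val_castSucc, Fin.val_last, ← ih]; rfl
  exact ⟨fun n => next (prefixes n), fun n => ⟨(hnext _ (hP n)).1, hprefixes n ▸ hP n⟩⟩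

theorem List.getElem_eq_of_prefix_chain {X : Type*} {P : ℕ → List X}
    (hP : ∀ n, P n <+: P (n + 1)) {m n i : ℕ} (hm : i < (P m).length) (hn : i < (P n).length) :
    (P m)[i] = (P n)[i] := by
  have chain : ∀ {m n}, m ≤ n → P m <+: P n := fun h => by
    induction h with
    | refl => exact List.prefix_refl _
    | step _ ih => exact ih.trans (hP _)
  rcases le_total m n with h | h
  · exact (chain h).getElem hm
  · exact ((chain h).getElem hn).symm

section SubstProd

variable {M ι : Type*} [Monoid M]

def substProd (f : ι → M → M) (l : List M) (s : List ι) : M :=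
  (List.zipWith (fun x a => f a x) l s).prod

@[simp]
theorem substProd_nil (f : ι → M → M) (s : List ι) : substProd f [] s = 1 := rfl

theorem substProd_append_singleton (f : ι → M → M) {l : List M} {s : List ι}
    (h : l.length = s.length) (x : M) (a : ι) :
    substProd f (l ++ [x]) (s ++ [a]) = substProd f l s * f a x := by
  simp [substProd, List.zipWith_append h]

theorem exists_seq_mul_substProd_mem [Finite ι] (f : ι → M → M) {w v : Ultrafilter M}
    (hw : ∀ a, w * v.map (f a) = w) (hv : ∀ a b, v.map (f a) * v.map (f b) = v.map (f a))
    {A B : Set M} (hA : A ∈ w) (hB : B ∈ w) {C : Set M} (hC : C ∈ v) :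
    ∃ p ∈ B, ∃ xs : ℕ → M, (∀ n, xs n ∈ C) ∧
      ∀ s : List ι, p * substProd f (List.ofFn fun i : Fin s.length => xs i) s ∈ A := by
  obtain ⟨G, hGA, hGw, hG⟩ := Ultrafilter.exists_subset_mem_forall_mul_mem hw hv hA
  obtain ⟨p, hpG, hpB⟩ := Ultrafilter.nonempty_of_mem (Filter.inter_mem hGw hB)
  let good : List M → Prop := fun l => ∀ s : List ι, s.length = l.length → p * substProd f l s ∈ G
  have hstep : ∀ l, good l → ∃ x, x ∈ C ∧ good (l ++ [x]) := by
    intro l hl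
    have hT : {x | x ∈ C ∧ ∀ s ∈ {s : List ι | s.length = l.length}, ∀ a,
        p * substProd f l s * f a x ∈ G} ∈ v :=
      Filter.inter_mem hC <| (Filter.eventually_all_finite (List.finite_length_eq ι _)).2
        fun s hs => Filter.eventually_all.2 fun a => hG _ (hl s hs) a
    obtain ⟨x, hxC, hx⟩ := Ultrafilter.nonempty_of_mem hT
    refine ⟨x, hxC, fun s hs => ?_⟩
    obtain rfl | ⟨s, a, rfl⟩ := s.eq_nil_or_concat
    · simp at hs
    have hs : l.length = s.length := by simpa using hs.symm
    rw [List.concat_eq_append, substProd_append_singleton f hs, ← mul_assoc]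
    exact hx s hs.symm a
  have h₀ : good [] := fun s hs => by simpa [List.length_eq_zero_iff.1 hs] using hpG
  obtain ⟨xs, hxs⟩ := exists_seq_forall_ofFn h₀ hstep
  exact ⟨p, hpB, xs, fun n => (hxs n).1, fun s => hGA ((hxs s.length).2 s (by simp))⟩

end SubstProd

/-- Words over `α` in which the extra letter `none` plays the role of a variable. -/
abbrev VarWord (α : Type*) := FreeMonoid (Option α)

namespace VarWord

section Ultrafilters

variable {α : Type*}

def noVar : Set (VarWord α) := {x | none ∉ x.toList}

def startsWithVar : Set (VarWord α) := {x | x.toList.head? = some none}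

def subst (a : α) : VarWord α →* VarWord α := FreeMonoid.map fun o => some (o.getD a)

theorem toList_subst (a : α) (x : VarWord α) :
    (subst a x).toList = x.toList.map fun o => some (o.getD a) :=
  rfl

theorem subst_mem_noVar (a : α) (x : VarWord α) : subst a x ∈ noVar := by
  simp [noVar, toList_subst]

theorem subst_eq_self {a : α} {x : VarWord α} (hx : x ∈ noVar) : subst a x = x := by
  apply FreeMonoid.toList.injective
  rw [toList_subst]
  refine (List.map_congr_left ?_).trans x.toList.map_id
  rintro (_ | b) hb
  exacts [(hx hb).elim, rfl]

theorem mul_mem_noVar {x y : VarWord α} (hx : x ∈ noVar) (hy : y ∈ noVar) : x * y ∈ noVar := by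
  simp_all [noVar]

theorem mul_mem_startsWithVar {x : VarWord α} (hx : x ∈ startsWithVar) (y : VarWord α) :
    x * y ∈ startsWithVar := by
  change (x.toList ++ y.toList).head? = some none
  rw [List.head?_append, hx]
  rfl

theorem startsWithVar_mem_mul {U : Ultrafilter (VarWord α)} (hU : startsWithVar ∈ U)
    (V : Ultrafilter (VarWord α)) : startsWithVar ∈ U * V :=
  Ultrafilter.mem_mul_iff.2 <| Filter.mem_of_superset hU fun _ hx =>
    Filter.univ_mem' fun y => mul_mem_startsWithVar hx y

theorem noVar_mem_map_subst (a : α) (U : Ultrafilter (VarWord α)) :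
    noVar ∈ U.map (subst a) :=
  Ultrafilter.mem_map.2 <| Filter.univ_mem' fun x => subst_mem_noVar a x

theorem map_subst_eq_self {U : Ultrafilter (VarWord α)} (hU : noVar ∈ U) (a : α) :
    U.map (subst a) = U :=
  Ultrafilter.coe_injective <| by
    rw [Ultrafilter.coe_map, Filter.map_congr (Filter.eventuallyEq_of_mem hU fun _ hx =>
      subst_eq_self hx), Filter.map_id']

theorem exists_ultrafilter_mul_map_subst_eq :
    ∃ w v : Ultrafilter (VarWord α), noVar ∈ w ∧ startsWithVar ∈ v ∧
      (∀ a, w * v.map (subst a) = w) ∧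
      ∀ a b, v.map (subst a) * v.map (subst b) = v.map (subst a) := by
  let S : Set (Ultrafilter (VarWord α)) := {U | noVar ∈ U}
  have hSmul : ∀ U ∈ S, ∀ V ∈ S, U * V ∈ S := fun U hU V hV =>
    Ultrafilter.mem_mul_iff.2 <| Filter.mem_of_superset hU fun x hx =>
      Filter.mem_of_superset hV fun y hy => mul_mem_noVar hx hy
  obtain ⟨w, hwS, hww, hwmin⟩ := exists_minimal_idempotent Ultrafilter.continuous_mul_left
    (ultrafilter_isClosed_basic _).isCompact hSmul ⟨pure 1, by simp [noVar]⟩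
  let R : Set (Ultrafilter (VarWord α)) := Set.range (· * w) ∩ {U | startsWithVar ∈ U}
  have hRmul : ∀ U ∈ R, ∀ V ∈ R, U * V ∈ R := by
    rintro _ ⟨⟨U, rfl⟩, hU⟩ _ ⟨⟨V, rfl⟩, -⟩
    exact ⟨⟨U * w * V, by simp only [mul_assoc]⟩,
      show startsWithVar ∈ U * w * (V * w) from startsWithVar_mem_mul hU _⟩
  have hRne : R.Nonempty :=
    ⟨pure (FreeMonoid.of none) * w, ⟨_, rfl⟩, startsWithVar_mem_mul (Ultrafilter.mem_pure.2 rfl) w⟩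
  obtain ⟨v, ⟨⟨U, hUv⟩, hv⟩, hvv⟩ := exists_idempotent_in_compact_subsemigroup
    Ultrafilter.continuous_mul_left R hRne
    ((isCompact_range (Ultrafilter.continuous_mul_left w)).inter_right
      (ultrafilter_isClosed_basic _)) hRmul
  have hvw : v * w = v := by rw [← hUv, mul_assoc, hww]
  have hmap_w : ∀ a, v.map (subst a) * w = v.map (subst a) := fun a => by
    rw [← map_subst_eq_self hwS a, ← Ultrafilter.map_mul, hvw]
  have hw_map : ∀ a, w * v.map (subst a) = w := fun a => by
    refine hwmin _ (hSmul w hwS _ (noVar_mem_map_subst a v)) ?_ ?_ ?_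
    · have h : w * v.map (subst a) = (w * v).map (subst a) := by
        rw [Ultrafilter.map_mul, map_subst_eq_self hwS]
      rw [h, ← Ultrafilter.map_mul, mul_assoc, ← mul_assoc v, hvw, hvv]
    · rw [mul_assoc, hmap_w]
    · rw [← mul_assoc, hww]
  refine ⟨w, v, hwS, hv, hw_map, fun a b => ?_⟩
  calc v.map (subst a) * v.map (subst b) = v.map (subst a) * w * v.map (subst b) := by
        rw [hmap_w]
    _ = v.map (subst a) := by rw [mul_assoc, hw_map, hmap_w]

end Ultrafilters

section ParamWord

variable {α : Type}

def paramBlock (j : ℕ) (x : VarWord α) : List (α ⊕ ℕ) :=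
  x.toList.map fun o => o.elim (Sum.inr j) Sum.inl

def paramPrefix (w : VarWord α) (xs : ℕ → VarWord α) : ℕ → List (α ⊕ ℕ)
  | 0 => paramBlock 0 w
  | n + 1 => paramPrefix w xs n ++ paramBlock n (xs n)

/-- The default `Sum.inr 0` is never read: once every `xs n` is nonempty,
`paramPrefix w xs (i + 1)` is longer than `i`. -/
def paramWord (w : VarWord α) (xs : ℕ → VarWord α) (i : ℕ) : α ⊕ ℕ :=
  (paramPrefix w xs (i + 1)).getD i (Sum.inr 0)

def substParam (s : List α) : α ⊕ ℕ → Option α :=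
  Sum.elim some fun i => s[i]?

variable {w : VarWord α} {xs : ℕ → VarWord α}

theorem paramPrefix_succ (w : VarWord α) (xs : ℕ → VarWord α) (n : ℕ) :
    paramPrefix w xs (n + 1) = paramPrefix w xs n ++ paramBlock n (xs n) :=
  rfl

theorem exists_paramBlock_eq_cons {x : VarWord α} (hx : x ∈ startsWithVar) (j : ℕ) :
    ∃ l, paramBlock j x = Sum.inr j :: l := by
  obtain ⟨y, hy⟩ := List.head?_eq_some_iff.1 hx
  exact ⟨_, by rw [paramBlock, hy, List.map_cons]; rfl⟩

theorem lt_of_inr_mem_paramPrefix (hw : w ∈ noVar) {j n : ℕ}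
    (h : Sum.inr j ∈ paramPrefix w xs n) : j < n := by
  induction n with
  | zero =>
    obtain ⟨_ | a, ha, h⟩ := List.mem_map.1 h
    exacts [(hw ha).elim, Sum.inl_ne_inr h |>.elim]
  | succ n ih =>
    rcases List.mem_append.1 h with h | h
    · exact (ih h).trans n.lt_succ_self
    · obtain ⟨_ | a, -, h⟩ := List.mem_map.1 h
      exacts [(Sum.inr_injective h).ge.trans_lt n.lt_succ_self, Sum.inl_ne_inr h |>.elim]

theorem length_paramPrefix_lt (hxs : ∀ n, xs n ∈ startsWithVar) (n : ℕ) :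
    (paramPrefix w xs n).length < (paramPrefix w xs (n + 1)).length := by
  obtain ⟨l, hl⟩ := exists_paramBlock_eq_cons (hxs n) n
  simp [paramPrefix_succ, hl]

theorem le_length_paramPrefix (hxs : ∀ n, xs n ∈ startsWithVar) (n : ℕ) :
    n ≤ (paramPrefix w xs n).length := by
  induction n with
  | zero => exact Nat.zero_le _
  | succ n ih => exact ih.trans_lt (length_paramPrefix_lt hxs n)

theorem paramWord_eq_getElem (hxs : ∀ n, xs n ∈ startsWithVar) {n i : ℕ}
    (hi : i < (paramPrefix w xs n).length) : paramWord w xs i = (paramPrefix w xs n)[i] := by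
  have hi' : i < (paramPrefix w xs (i + 1)).length := le_length_paramPrefix hxs (i + 1)
  rw [paramWord, List.getD_eq_getElem _ _ hi']
  exact List.getElem_eq_of_prefix_chain (fun _ => List.prefix_append _ _) hi' hi

theorem paramWord_length_paramPrefix (hxs : ∀ n, xs n ∈ startsWithVar) (n : ℕ) :
    paramWord w xs (paramPrefix w xs n).length = Sum.inr n := by
  rw [paramWord_eq_getElem hxs (length_paramPrefix_lt hxs n)]
  obtain ⟨l, hl⟩ := exists_paramBlock_eq_cons (hxs n) n
  simp [paramPrefix_succ, hl]

theorem length_paramPrefix_le_of_paramWord_eq (hw : w ∈ noVar)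
    (hxs : ∀ n, xs n ∈ startsWithVar) {i n : ℕ} (h : paramWord w xs i = Sum.inr n) :
    (paramPrefix w xs n).length ≤ i := by
  by_contra! hi
  rw [paramWord_eq_getElem hxs hi] at h
  exact (lt_of_inr_mem_paramPrefix hw (h ▸ List.getElem_mem hi)).false

theorem isInfParamWord_paramWord (hw : w ∈ noVar) (hxs : ∀ n, xs n ∈ startsWithVar) :
    IsInfParamWord (paramWord w xs) :=
  ⟨fun k => ⟨_, paramWord_length_paramPrefix hxs k⟩, fun k _ h =>
    ⟨_, (length_paramPrefix_lt hxs k).trans_le (length_paramPrefix_le_of_paramWord_eq hw hxs h),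
      paramWord_length_paramPrefix hxs k⟩⟩

theorem map_substParam_paramBlock (x : VarWord α) {s : List α} {a : α} {n : ℕ}
    (hn : s.length = n) : (paramBlock n x).map (substParam (s ++ [a])) = (subst a x).toList := by
  rw [paramBlock, List.map_map, toList_subst]
  refine List.map_congr_left fun o _ => ?_
  cases o <;> simp [substParam, ← hn]

theorem map_substParam_paramPrefix (hw : w ∈ noVar) {s : List α} {n : ℕ} (hn : s.length = n) :
    (paramPrefix w xs n).map (substParam s) =
      (w * substProd (fun a => subst a) (List.ofFn fun i : Fin n => xs i) s).toList := by
  induction n generalizing s with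
  | zero =>
    rw [List.length_eq_zero_iff.1 hn, List.ofFn_zero, substProd_nil, mul_one, paramPrefix,
      paramBlock, List.map_map]
    refine (List.map_congr_left fun o ho => ?_).trans w.toList.map_id
    cases o
    exacts [(hw ho).elim, rfl]
  | succ n ih =>
    obtain rfl | ⟨s, a, rfl⟩ := s.eq_nil_or_concat
    · simp at hn
    have hn : s.length = n := by simpa using hn
    have hprefix : (paramPrefix w xs n).map (substParam (s ++ [a])) =
        (paramPrefix w xs n).map (substParam s) := by
      refine List.map_congr_left fun e he => ?_
      rcases e with b | j
      · rfl
      · exact List.getElem?_append_left (hn ▸ lt_of_inr_mem_paramPrefix hw he)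
    rw [List.concat_eq_append, paramPrefix_succ, List.map_append, hprefix, ih hn,
      map_substParam_paramBlock _ hn, List.ofFn_succ_last,
      substProd_append_singleton _ (by simp [hn])]
    simp

theorem length_eq_of_isSubst (hw : w ∈ noVar) (hxs : ∀ n, xs n ∈ startsWithVar) {s t : List α}
    (h : IsSubst (paramWord w xs) s t) : t.length = (paramPrefix w xs s.length).length := by
  obtain ⟨hlen, hfirst, -⟩ := h
  refine le_antisymm ?_ (length_paramPrefix_le_of_paramWord_eq hw hxs hlen)
  by_contra! hlt
  exact hfirst _ hlt (paramWord_length_paramPrefix hxs _)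

theorem map_some_eq_of_isSubst (hw : w ∈ noVar) (hxs : ∀ n, xs n ∈ startsWithVar) {s t : List α}
    (h : IsSubst (paramWord w xs) s t) :
    t.map some = (paramPrefix w xs s.length).map (substParam s) := by
  have hlen := length_eq_of_isSubst hw hxs h
  refine List.ext_getElem (by simp [hlen]) fun i hi _ => ?_
  have hit : i < t.length := by simpa using hi
  rw [List.getElem_map, List.getElem_map, ← paramWord_eq_getElem hxs (hlen ▸ hit)]
  obtain ⟨hletter, hparam⟩ := h.2.2 i hit
  rcases hW : paramWord w xs i with a | j
  · simp [substParam, ← hletter a hW]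
  · obtain ⟨hj, htj⟩ := hparam j hW
    simpa [substParam, hj] using htj

theorem eq_reduceOption_of_isSubst (hw : w ∈ noVar) (hxs : ∀ n, xs n ∈ startsWithVar)
    {s t : List α} (h : IsSubst (paramWord w xs) s t) :
    t = List.reduceOption
      (w * substProd (fun a => subst a) (List.ofFn fun i : Fin s.length => xs i) s).toList := by
  rw [← map_substParam_paramPrefix hw rfl, ← map_some_eq_of_isSubst hw hxs h]
  simp [List.reduceOption]

end ParamWord

end VarWord

/-- Carlson–Simpson: for every finite alphabet `α` and every colouring of
the set of finite words over `α` with finitely many colours, there is an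
infinite-parameter word `W` such that `W[α*] = {W(s) : s ∈ α*}` is monochromatic. -/
theorem carlson_simpson (α : Type) [Fintype α] (k : ℕ) (χ : List α → Fin k) :
    ∃ W : ℕ → α ⊕ ℕ, IsInfParamWord W ∧
      ∃ c : Fin k, ∀ s t : List α, IsSubst W s t → χ t = c := by
  obtain ⟨w, v, hw, hv, hwv, hvv⟩ := VarWord.exists_ultrafilter_mul_map_subst_eq (α := α)
  let colour : VarWord α → Fin k := fun x => χ x.toList.reduceOption
  obtain ⟨c, hc⟩ := Ultrafilter.eq_pure_of_finite (w.map colour)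
  have hcolour : colour ⁻¹' {c} ∈ w := Ultrafilter.mem_map.1 (hc ▸ Ultrafilter.mem_pure.2 rfl)
  obtain ⟨p, hp, xs, hxs, hmono⟩ :=
    exists_seq_mul_substProd_mem (fun a => VarWord.subst a) hwv hvv hcolour hw hv
  refine ⟨VarWord.paramWord p xs, VarWord.isInfParamWord_paramWord hp hxs, c, fun s t h => ?_⟩
  rw [VarWord.eq_reduceOption_of_isSubst hp hxs h]
  exact hmono s
end
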